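/- Let Zₙ be the size of the n-th generation of a Galton–Watson process whose child distribution Z₁ is supported on positive integers with finite mean μ = E Z₁, and suppose Z₁* ⪯ Z₁ (Z₁ is NBUE). Then Zₙ* ⪯ Zₙ for all n, and consequently P[Zₙ ≥ t μⁿ] ≤ e^{1−t} and P[Zₙ ≤ t μⁿ] ≤ t for all t > 0. -/

import Mathlib

open MeasureTheory

/-- Convolution of two laws on `ℕ`. -/
noncomputable def nconv (ρ σ : Measure ℕ) : Measure ℕ :=
  (ρ.prod σ).map (fun p => p.1 + p.2)

/-- Law of the sum of `k` i.i.d. copies of a law `ρ` on `ℕ`. -/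
noncomputable def nfold (ρ : Measure ℕ) : ℕ → Measure ℕ
  | 0 => Measure.dirac 0
  | (k + 1) => nconv (nfold ρ k) ρ

/-- Law of the `n`-th generation `Zₙ` of a Galton–Watson process with child law `ν`:
`Z₀ = 1` and `Z_{n+1}` is the sum of `Z₁ ~ ν` independent copies of `Zₙ`. -/
noncomputable def gwLaw (ν : Measure ℕ) : ℕ → Measure ℕ
  | 0 => Measure.dirac 1
  | (n + 1) => Measure.sum (fun l => ν {l} • nfold (gwLaw ν n) l)

/-- NBUE for an integer-valued law `ρ`: `ρ^e ⪯ ρ`, encoded multiplied through by the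
mean: `Σ_{n>k} ρ[n,∞) ≤ (E ρ) · ρ(k,∞)` for all `k`. -/
def NBUE (ρ : Measure ℕ) : Prop :=
  ∀ k : ℕ, (∑' n : ℕ, if k < n then ρ (Set.Ici n) else 0)
    ≤ (∑' j : ℕ, (j : ENNReal) * ρ {j}) * ρ (Set.Ioi k)

/-!
Write `γ k = E (Z - k)₊ = ∑_{s ≥ k} P(Z > s)`. For a law on `ℕ`, NBUE says
`γ k ≤ E Z · P(Z > k)`: the equilibrium law (weights `P(Z > s) / E Z`) is dominated by `Z - 1`.

If `Y` is NBUE and independent of `X`, then `E (X + Y - k)₊ ≤ E Y · P(X + Y > k) + E (X - k)₊`.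
Iterating this over a sum `S_l` of `l` copies of `Zₙ` gives
`E (S_l - k)₊ ≤ E Zₙ · ∑_{i < l} P(S_{i+1} > k)`. Averaging over `l ~ Z₁` turns the right-hand
side into `E Zₙ · E Z₁ · E g(Z₁^e)` with `g i = P(S_{i+1} > k)` nondecreasing. Since
`Z₁^e ⪯ Z₁ - 1`, this is at most `E Zₙ · E Z₁ · P(Z_{n+1} > k)`, so `Z_{n+1}` is NBUE.

For the tails let `μ = E Z`. The sequence `γ` drops by `P(Z > k) ≥ γ k / μ` at each step, so
`γ k ≤ μ e^{-k/μ}`. Also `μ · P(Z ≥ x) ≤ γ (x - μ)` (after interpolating `γ`), which gives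
`e^{1 - x/μ}`. For the lower tail, `μ ≤ j + γ j ≤ j + μ P(Z > j)`.
-/

open Set ENNReal

noncomputable def natMean (ρ : Measure ℕ) : ℝ≥0∞ := ∫⁻ x, (x : ℝ≥0∞) ∂ρ

noncomputable def stopLoss (ρ : Measure ℕ) (k : ℕ) : ℝ≥0∞ := ∫⁻ x, ((x - k : ℕ) : ℝ≥0∞) ∂ρ

lemma natMean_eq_tsum (ρ : Measure ℕ) : natMean ρ = ∑' j : ℕ, (j : ℝ≥0∞) * ρ {j} :=
  lintegral_countable' _

@[simp]
lemma stopLoss_zero (ρ : Measure ℕ) : stopLoss ρ 0 = natMean ρ := by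
  simp [stopLoss, natMean]

lemma stopLoss_eq_add_stopLoss_succ (ρ : Measure ℕ) (k : ℕ) :
    stopLoss ρ k = ρ (Ioi k) + stopLoss ρ (k + 1) := by
  have h (x : ℕ) : ((x - k : ℕ) : ℝ≥0∞) = (Ioi k).indicator 1 x + ((x - (k + 1) : ℕ) : ℝ≥0∞) := by
    rcases lt_or_ge k x with hx | hx
    · rw [indicator_of_mem (mem_Ioi.2 hx), Pi.one_apply, add_comm]
      exact_mod_cast (by omega : x - k = x - (k + 1) + 1)
    · rw [indicator_of_notMem (notMem_Ioi.2 hx)]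
      simp [Nat.sub_eq_zero_of_le hx, Nat.sub_eq_zero_of_le (hx.trans k.le_succ)]
  simp only [stopLoss, h]
  rw [lintegral_add_left (by fun_prop), lintegral_indicator_one measurableSet_Ioi]

lemma natMean_le_add_stopLoss (ρ : Measure ℕ) [IsProbabilityMeasure ρ] (j : ℕ) :
    natMean ρ ≤ j + stopLoss ρ j := by
  calc natMean ρ ≤ ∫⁻ x, (j + ((x - j : ℕ) : ℝ≥0∞)) ∂ρ :=
        lintegral_mono fun x => by exact_mod_cast Nat.mono_cast (by omega : x ≤ j + (x - j))
    _ = j + stopLoss ρ j := by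
        rw [lintegral_add_left measurable_const, lintegral_const, measure_univ, mul_one, stopLoss]

lemma stopLoss_le_natMean (ρ : Measure ℕ) (k : ℕ) : stopLoss ρ k ≤ natMean ρ :=
  lintegral_mono fun x => Nat.mono_cast (Nat.sub_le x k)

lemma eq_add_sum_range_of_monotone {g : ℕ → ℝ≥0∞} (hg : Monotone g) (x : ℕ) :
    g x = g 0 + ∑ s ∈ Finset.range x, (g (s + 1) - g s) := by
  induction x with
  | zero => simp
  | succ x ih => rw [Finset.sum_range_succ, ← add_assoc, ← ih, add_tsub_cancel_of_le (hg x.le_succ)]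

lemma sum_range_eq_tsum_indicator (g : ℕ → ℝ≥0∞) (x : ℕ) :
    ∑ i ∈ Finset.range x, g i = ∑' i, (Ioi i).indicator (fun _ => g i) x := by
  rw [tsum_eq_sum (s := Finset.range x) fun i hi => indicator_of_notMem (by simpa using hi) _]
  exact Finset.sum_congr rfl fun i hi =>
    (indicator_of_mem (mem_Ioi.2 (by simpa using hi)) fun _ => g i).symm

lemma lintegral_sum_range (μ : Measure ℕ) (g : ℕ → ℝ≥0∞) :
    ∫⁻ x, ∑ i ∈ Finset.range x, g i ∂μ = ∑' i, g i * μ (Ioi i) := by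
  simp_rw [sum_range_eq_tsum_indicator]
  rw [lintegral_tsum fun _ => by fun_prop]
  simp_rw [lintegral_indicator_const measurableSet_Ioi]

lemma lintegral_eq_add_tsum_of_monotone (μ : Measure ℕ) {g : ℕ → ℝ≥0∞} (hg : Monotone g) :
    ∫⁻ x, g x ∂μ = g 0 * μ univ + ∑' s, (g (s + 1) - g s) * μ (Ioi s) := by
  rw [lintegral_congr (eq_add_sum_range_of_monotone hg), lintegral_add_left measurable_const,
    lintegral_const, lintegral_sum_range]

lemma lintegral_le_mul_of_measure_Ioi_le {μ μ' : Measure ℕ} {c : ℝ≥0∞} {g : ℕ → ℝ≥0∞}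
    (hg : Monotone g) (huniv : μ univ ≤ c * μ' univ) (hIoi : ∀ s, μ (Ioi s) ≤ c * μ' (Ioi s)) :
    ∫⁻ x, g x ∂μ ≤ c * ∫⁻ x, g x ∂μ' := by
  rw [lintegral_eq_add_tsum_of_monotone μ hg, lintegral_eq_add_tsum_of_monotone μ' hg, mul_add,
    ← ENNReal.tsum_mul_left]
  refine add_le_add ?_ (ENNReal.tsum_le_tsum fun s => ?_)
  · calc g 0 * μ univ ≤ g 0 * (c * μ' univ) := by gcongr
      _ = c * (g 0 * μ' univ) := mul_left_comm _ _ _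
  · calc (g (s + 1) - g s) * μ (Ioi s) ≤ (g (s + 1) - g s) * (c * μ' (Ioi s)) := by
          gcongr; exact hIoi s
      _ = c * ((g (s + 1) - g s) * μ' (Ioi s)) := mul_left_comm _ _ _

-- Normalised by its total mass `natMean ρ`, this is the law of `⌊Z*⌋` for `Z ~ ρ`, where
-- `Z* = U Z^s` is the equilibrium transform: `P(⌊U Z^s⌋ = s) = P(Z > s) / E Z`.
noncomputable def equilibrium (ρ : Measure ℕ) : Measure ℕ :=
  Measure.sum fun s => ρ (Ioi s) • Measure.dirac s

lemma lintegral_equilibrium (ρ : Measure ℕ) (g : ℕ → ℝ≥0∞) :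
    ∫⁻ x, g x ∂equilibrium ρ = ∑' s, ρ (Ioi s) * g s := by
  simp [equilibrium, lintegral_sum_measure, lintegral_smul_measure]

lemma equilibrium_apply (ρ : Measure ℕ) (t : Set ℕ) :
    equilibrium ρ t = ∑' s, t.indicator (fun s => ρ (Ioi s)) s := by
  rw [← lintegral_indicator_one MeasurableSet.of_discrete, lintegral_equilibrium]
  congr 1; ext s; by_cases hs : s ∈ t <;> simp [hs]

lemma stopLoss_eq_equilibrium_Ici (ρ : Measure ℕ) (k : ℕ) :
    stopLoss ρ k = equilibrium ρ (Ici k) := by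
  have hg : Monotone fun x : ℕ => ((x - k : ℕ) : ℝ≥0∞) :=
    fun a b hab => Nat.mono_cast (Nat.sub_le_sub_right hab k)
  rw [stopLoss, lintegral_eq_add_tsum_of_monotone ρ hg, equilibrium_apply]
  simp only [Nat.zero_sub, CharP.cast_eq_zero, zero_mul, zero_add]
  congr 1; ext s
  rcases lt_or_ge s k with hs | hs
  · simp [hs, Nat.sub_eq_zero_of_le hs, Nat.sub_eq_zero_of_le hs.le]
  · rw [indicator_of_mem (mem_Ici.2 hs), show s + 1 - k = (s - k) + 1 by omega]
    simp

lemma equilibrium_univ (ρ : Measure ℕ) : equilibrium ρ univ = natMean ρ := by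
  rw [← Ici_bot, ← stopLoss_eq_equilibrium_Ici]; exact stopLoss_zero ρ

lemma nbue_iff_stopLoss_le (ρ : Measure ℕ) :
    NBUE ρ ↔ ∀ k, stopLoss ρ k ≤ natMean ρ * ρ (Ioi k) := by
  refine forall_congr' fun k => ?_
  rw [← natMean_eq_tsum, stopLoss_eq_equilibrium_Ici, equilibrium_apply,
    tsum_eq_zero_add' ENNReal.summable]
  simp only [Nat.not_lt_zero, if_false, zero_add, Nat.lt_succ_iff, Ici_add_one_eq_Ioi,
    indicator_apply, mem_Ici]

lemma NBUE.lintegral_sum_range_le {ν : Measure ℕ} [IsProbabilityMeasure ν] (hν : NBUE ν)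
    {g : ℕ → ℝ≥0∞} (hg : Monotone g) :
    ∫⁻ l, ∑ i ∈ Finset.range l, g i ∂ν ≤ natMean ν * ∫⁻ l, g (l - 1) ∂ν := by
  have hpred : Measurable fun l : ℕ => l - 1 := Measurable.of_discrete
  have hequi : ∫⁻ l, ∑ i ∈ Finset.range l, g i ∂ν = ∫⁻ i, g i ∂equilibrium ν := by
    rw [lintegral_sum_range, lintegral_equilibrium]
    simp_rw [mul_comm]
  rw [hequi, ← lintegral_map Measurable.of_discrete hpred]
  refine lintegral_le_mul_of_measure_Ioi_le hg ?_ fun s => ?_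
  · rw [Measure.map_apply hpred MeasurableSet.univ, preimage_univ, equilibrium_univ,
      measure_univ, mul_one]
  · have hpre : (fun l : ℕ => l - 1) ⁻¹' Ioi s = Ioi (s + 1) := ext fun _ => by simp; omega
    rw [Measure.map_apply hpred measurableSet_Ioi, hpre, ← Ici_add_one_eq_Ioi,
      ← stopLoss_eq_equilibrium_Ici]
    exact (nbue_iff_stopLoss_le ν).1 hν (s + 1)

lemma lintegral_nconv (ρ σ : Measure ℕ) [SFinite σ] (f : ℕ → ℝ≥0∞) :
    ∫⁻ z, f z ∂nconv ρ σ = ∫⁻ x, ∫⁻ y, f (x + y) ∂σ ∂ρ :=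
  Measure.lintegral_conv Measurable.of_discrete

lemma nconv_apply (ρ σ : Measure ℕ) [SFinite σ] (t : Set ℕ) :
    nconv ρ σ t = ∫⁻ x, σ ((x + ·) ⁻¹' t) ∂ρ := by
  rw [← lintegral_indicator_one MeasurableSet.of_discrete, lintegral_nconv]
  simp_rw [← lintegral_indicator_one (MeasurableSet.of_discrete (s := (_ + ·) ⁻¹' t))]
  rfl

instance (ρ σ : Measure ℕ) [IsProbabilityMeasure ρ] [IsProbabilityMeasure σ] :
    IsProbabilityMeasure (nconv ρ σ) :=
  inferInstanceAs (IsProbabilityMeasure (ρ ∗ σ))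

lemma natMean_nconv (ρ σ : Measure ℕ) [IsProbabilityMeasure ρ] [IsProbabilityMeasure σ] :
    natMean (nconv ρ σ) = natMean ρ + natMean σ := by
  simp only [natMean, lintegral_nconv, Nat.cast_add]
  simp_rw [lintegral_add_left measurable_const, lintegral_const, measure_univ, mul_one]
  rw [lintegral_add_right _ measurable_const, lintegral_const, measure_univ, mul_one]

lemma measure_Ioi_le_nconv_Ioi (ρ σ : Measure ℕ) [IsProbabilityMeasure σ] (k : ℕ) :
    ρ (Ioi k) ≤ nconv ρ σ (Ioi k) := by
  rw [← lintegral_indicator_one measurableSet_Ioi, nconv_apply]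
  refine lintegral_mono fun x => ?_
  by_cases h : k < x
  · rw [indicator_of_mem (mem_Ioi.2 h), Pi.one_apply, ← measure_univ (μ := σ)]
    exact measure_mono fun y _ => show k < x + y by omega
  · rw [indicator_of_notMem (by simpa using h)]; exact zero_le

lemma NBUE.stopLoss_nconv_le (ρ : Measure ℕ) {σ : Measure ℕ} [IsProbabilityMeasure σ]
    (hσ : NBUE σ) (k : ℕ) :
    stopLoss (nconv ρ σ) k ≤ natMean σ * nconv ρ σ (Ioi k) + stopLoss ρ k := by
  have hshift (x : ℕ) : ∫⁻ y, ((x + y - k : ℕ) : ℝ≥0∞) ∂σ = stopLoss σ (k - x) + (x - k : ℕ) := by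
    have h (y : ℕ) : ((x + y - k : ℕ) : ℝ≥0∞) = ((y - (k - x) : ℕ) : ℝ≥0∞) + (x - k : ℕ) := by
      exact_mod_cast (by omega : x + y - k = y - (k - x) + (x - k))
    simp_rw [h]
    rw [lintegral_add_right _ measurable_const, lintegral_const, measure_univ, mul_one, stopLoss]
  have htail (x : ℕ) : σ (Ioi (k - x)) ≤ σ ((x + ·) ⁻¹' Ioi k) :=
    measure_mono fun y hy => show k < x + y by have := mem_Ioi.1 hy; omega
  calc stopLoss (nconv ρ σ) k
      = ∫⁻ x, (stopLoss σ (k - x) + (x - k : ℕ)) ∂ρ := by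
        rw [stopLoss, lintegral_nconv]; exact lintegral_congr hshift
    _ ≤ ∫⁻ x, (natMean σ * σ ((x + ·) ⁻¹' Ioi k) + (x - k : ℕ)) ∂ρ :=
        lintegral_mono fun x => add_le_add_left
          (((nbue_iff_stopLoss_le σ).1 hσ _).trans (mul_le_mul_right (htail x) _)) _
    _ = natMean σ * nconv ρ σ (Ioi k) + stopLoss ρ k := by
        rw [lintegral_add_right _ Measurable.of_discrete,
          lintegral_const_mul _ Measurable.of_discrete, nconv_apply, stopLoss]

instance (ρ : Measure ℕ) [IsProbabilityMeasure ρ] (l : ℕ) : IsProbabilityMeasure (nfold ρ l) := by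
  induction l with
  | zero => rw [nfold]; infer_instance
  | succ l ih => rw [nfold]; infer_instance

lemma natMean_nfold (ρ : Measure ℕ) [IsProbabilityMeasure ρ] (l : ℕ) :
    natMean (nfold ρ l) = l * natMean ρ := by
  induction l with
  | zero => simp [nfold, natMean]
  | succ l ih => rw [nfold, natMean_nconv, ih]; push_cast; ring

lemma monotone_nfold_Ioi (ρ : Measure ℕ) [IsProbabilityMeasure ρ] (k : ℕ) :
    Monotone fun l => nfold ρ l (Ioi k) :=
  monotone_nat_of_le_succ fun l => measure_Ioi_le_nconv_Ioi (nfold ρ l) ρ k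

lemma NBUE.stopLoss_nfold_le {ρ : Measure ℕ} [IsProbabilityMeasure ρ] (hρ : NBUE ρ) (l k : ℕ) :
    stopLoss (nfold ρ l) k ≤ natMean ρ * ∑ i ∈ Finset.range l, nfold ρ (i + 1) (Ioi k) := by
  induction l with
  | zero => simp [nfold, stopLoss]
  | succ l ih =>
    calc stopLoss (nfold ρ (l + 1)) k
        ≤ natMean ρ * nfold ρ (l + 1) (Ioi k) + stopLoss (nfold ρ l) k :=
          hρ.stopLoss_nconv_le (nfold ρ l) k
      _ ≤ natMean ρ * nfold ρ (l + 1) (Ioi k)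
            + natMean ρ * ∑ i ∈ Finset.range l, nfold ρ (i + 1) (Ioi k) := by gcongr
      _ = natMean ρ * ∑ i ∈ Finset.range (l + 1), nfold ρ (i + 1) (Ioi k) := by
          rw [Finset.sum_range_succ, mul_add, add_comm]

lemma gwLaw_succ (ν : Measure ℕ) (n : ℕ) : gwLaw ν (n + 1) = ν.bind (nfold (gwLaw ν n)) := by
  ext t ht
  rw [Measure.bind_apply ht Measurable.of_discrete.aemeasurable, lintegral_countable', gwLaw,
    Measure.sum_apply _ ht]
  simp_rw [Measure.smul_apply, smul_eq_mul, mul_comm]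

lemma lintegral_gwLaw_succ (ν : Measure ℕ) (n : ℕ) (f : ℕ → ℝ≥0∞) :
    ∫⁻ z, f z ∂gwLaw ν (n + 1) = ∫⁻ l, ∫⁻ z, f z ∂nfold (gwLaw ν n) l ∂ν := by
  rw [gwLaw_succ, Measure.lintegral_bind Measurable.of_discrete.aemeasurable
    Measurable.of_discrete.aemeasurable]

lemma gwLaw_succ_apply (ν : Measure ℕ) (n : ℕ) (t : Set ℕ) :
    gwLaw ν (n + 1) t = ∫⁻ l, nfold (gwLaw ν n) l t ∂ν := by
  rw [gwLaw_succ, Measure.bind_apply MeasurableSet.of_discrete Measurable.of_discrete.aemeasurable]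

instance (ν : Measure ℕ) [IsProbabilityMeasure ν] (n : ℕ) : IsProbabilityMeasure (gwLaw ν n) := by
  induction n with
  | zero => rw [gwLaw]; infer_instance
  | succ n ih =>
    rw [gwLaw_succ]
    exact isProbabilityMeasure_bind Measurable.of_discrete.aemeasurable (ae_of_all _ inferInstance)

lemma natMean_gwLaw (ν : Measure ℕ) [IsProbabilityMeasure ν] (n : ℕ) :
    natMean (gwLaw ν n) = natMean ν ^ n := by
  induction n with
  | zero => simp [gwLaw, natMean]
  | succ n ih =>
    calc natMean (gwLaw ν (n + 1)) = ∫⁻ l, natMean (nfold (gwLaw ν n) l) ∂ν :=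
          lintegral_gwLaw_succ ν n _
      _ = ∫⁻ l, l * natMean (gwLaw ν n) ∂ν := by simp_rw [natMean_nfold]
      _ = natMean ν ^ (n + 1) := by
          rw [lintegral_mul_const _ Measurable.of_discrete, ih, pow_succ, mul_comm]; rfl

lemma NBUE.gwLaw_succ {ν : Measure ℕ} [IsProbabilityMeasure ν] (hν : NBUE ν) (hν0 : ν {0} = 0)
    {n : ℕ} (hZ : NBUE (gwLaw ν n)) : NBUE (gwLaw ν (n + 1)) := by
  rw [nbue_iff_stopLoss_le]
  intro k
  set g : ℕ → ℝ≥0∞ := fun i => nfold (gwLaw ν n) (i + 1) (Ioi k)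
  have hg : Monotone g := fun i j hij => monotone_nfold_Ioi _ k (by omega : i + 1 ≤ j + 1)
  have hpos : ∀ᵐ l ∂ν, l ≠ 0 := by rw [ae_iff]; simpa using hν0
  have hshift : ∫⁻ l, g (l - 1) ∂ν = gwLaw ν (n + 1) (Ioi k) := by
    rw [gwLaw_succ_apply]
    refine lintegral_congr_ae (hpos.mono fun l hl => ?_)
    simp only [g, Nat.sub_add_cancel (Nat.pos_of_ne_zero hl)]
  calc stopLoss (gwLaw ν (n + 1)) k = ∫⁻ l, stopLoss (nfold (gwLaw ν n) l) k ∂ν :=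
        lintegral_gwLaw_succ ν n _
    _ ≤ ∫⁻ l, natMean (gwLaw ν n) * ∑ i ∈ Finset.range l, g i ∂ν :=
        lintegral_mono fun l => hZ.stopLoss_nfold_le l k
    _ = natMean (gwLaw ν n) * ∫⁻ l, ∑ i ∈ Finset.range l, g i ∂ν :=
        lintegral_const_mul _ Measurable.of_discrete
    _ ≤ natMean (gwLaw ν n) * (natMean ν * ∫⁻ l, g (l - 1) ∂ν) :=
        mul_le_mul_right (hν.lintegral_sum_range_le hg) _
    _ = natMean (gwLaw ν (n + 1)) * gwLaw ν (n + 1) (Ioi k) := by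
        rw [hshift, natMean_gwLaw, natMean_gwLaw, pow_succ, mul_assoc]

lemma nbue_dirac_one : NBUE (Measure.dirac 1) := by
  rw [nbue_iff_stopLoss_le]
  rintro (_ | k)
  · simp [natMean]
  · rw [stopLoss, lintegral_dirac, Nat.sub_eq_zero_of_le (Nat.le_add_left 1 k), Nat.cast_zero]
    exact zero_le

lemma NBUE.gwLaw {ν : Measure ℕ} [IsProbabilityMeasure ν] (hν : NBUE ν) (hν0 : ν {0} = 0)
    (n : ℕ) : NBUE (gwLaw ν n) := by
  induction n with
  | zero => exact nbue_dirac_one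
  | succ n ih => exact hν.gwLaw_succ hν0 ih

namespace StopLossSequence

open Real

variable {M : ℝ} {τ γ : ℕ → ℝ}

lemma le_mul_exp_neg_div (hM : 0 < M) (hsucc : ∀ k, γ k = τ k + γ (k + 1))
    (hle : ∀ k, γ k ≤ M * τ k) (hnn : ∀ k, 0 ≤ γ k) (h0 : γ 0 ≤ M) (k : ℕ) :
    γ k ≤ M * exp (-k / M) := by
  induction k with
  | zero => simpa using h0
  | succ k ih =>
    have hdecay : γ (k + 1) ≤ (1 - 1 / M) * γ k := by
      have hτk : γ k / M ≤ τ k := (div_le_iff₀ hM).2 (by linarith [hle k])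
      have : (1 - 1 / M) * γ k = γ k - γ k / M := by ring
      linarith [hsucc k]
    calc γ (k + 1) ≤ (1 - 1 / M) * γ k := hdecay
      _ ≤ exp (-(1 / M)) * (M * exp (-k / M)) :=
          mul_le_mul (one_sub_le_exp_neg _) ih (hnn k) (exp_pos _).le
      _ = M * exp (-(k + 1 : ℕ) / M) := by
          rw [mul_left_comm, ← exp_add]; congr 2; push_cast; ring

lemma mul_le_of_antitone (hsucc : ∀ k, γ k = τ k + γ (k + 1)) (hnn : ∀ k, 0 ≤ γ k)
    (hτ : Antitone τ) (i m : ℕ) : m * τ (i + m) ≤ γ (i + 1) := by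
  induction m generalizing i with
  | zero => simpa using hnn (i + 1)
  | succ m ih =>
    have h1 := ih (i + 1)
    have h2 : τ (i + (m + 1)) ≤ τ (i + 1) := hτ (by omega)
    rw [show i + 1 + m = i + (m + 1) by ring] at h1
    rw [hsucc (i + 1)]
    push_cast
    linarith

-- `(1 - θ) γ i + θ γ (i + 1)` is `E (Z - (i + θ))₊`, which dominates `M · P(Z > i + m)`
-- because `i + m + 1 = i + θ + M`.
lemma mul_le_interpolate (hM : 0 < M) (hsucc : ∀ k, γ k = τ k + γ (k + 1))
    (hle : ∀ k, γ k ≤ M * τ k) (hnn : ∀ k, 0 ≤ γ k) (hτ : Antitone τ) {i m : ℕ} {θ : ℝ}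
    (hθ0 : 0 ≤ θ) (hθ1 : θ ≤ 1) (hMθ : M = m + 1 - θ) :
    M * τ (i + m) ≤ (1 - θ / M) * γ i := by
  have hm := mul_le_of_antitone hsucc hnn hτ i m
  have hτi : τ (i + m) ≤ τ i := hτ (by omega)
  have hA : (m + 1) * τ (i + m) ≤ γ i := by linarith [hsucc i]
  have hB : m * τ (i + m) ≤ γ i - τ i := by linarith [hsucc i]
  have hC : θ * (γ i / M) ≤ θ * τ i :=
    mul_le_mul_of_nonneg_left ((div_le_iff₀ hM).2 (by linarith [hle i])) hθ0
  calc M * τ (i + m) = (1 - θ) * ((m + 1) * τ (i + m)) + θ * (m * τ (i + m)) := by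
        rw [hMθ]; ring
    _ ≤ (1 - θ) * γ i + θ * (γ i - τ i) :=
        add_le_add (mul_le_mul_of_nonneg_left hA (by linarith))
          (mul_le_mul_of_nonneg_left hB hθ0)
    _ ≤ (1 - θ / M) * γ i := by
        have : (1 - θ / M) * γ i = γ i - θ * (γ i / M) := by ring
        linarith

lemma le_exp_one_sub_div (hM : 1 ≤ M) (hsucc : ∀ k, γ k = τ k + γ (k + 1))
    (hle : ∀ k, γ k ≤ M * τ k) (hnn : ∀ k, 0 ≤ γ k) (h0 : γ 0 ≤ M) (hτ : Antitone τ) {j : ℕ}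
    (hj : M ≤ j + 1) : τ j ≤ exp (1 - (j + 1) / M) := by
  have hMpos : 0 < M := one_pos.trans_le hM
  set y : ℝ := j + 1 - M
  have hy : 0 ≤ y := by linarith
  set i := ⌊y⌋₊
  set θ : ℝ := y - i
  have hθ0 : 0 ≤ θ := sub_nonneg.2 (Nat.floor_le hy)
  have hθ1 : θ ≤ 1 := by have := Nat.lt_floor_add_one y; linarith
  have hij : i ≤ j := by
    have := Nat.floor_le hy; exact_mod_cast (by linarith : (i : ℝ) ≤ j)
  have hθi : θ + i = j + 1 - M := by simp [θ, y]
  have key : M * τ j ≤ (1 - θ / M) * γ i := by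
    have h := mul_le_interpolate hMpos hsucc hle hnn hτ (i := i) (m := j - i) hθ0 hθ1
      (by rw [Nat.cast_sub hij]; linarith)
    rwa [Nat.add_sub_cancel' hij] at h
  have hexp : (1 - θ / M) * γ i ≤ M * exp (1 - (j + 1) / M) :=
    calc (1 - θ / M) * γ i ≤ exp (-(θ / M)) * (M * exp (-i / M)) :=
          mul_le_mul (one_sub_le_exp_neg _) (le_mul_exp_neg_div hMpos hsucc hle hnn h0 i) (hnn i)
            (exp_pos _).le
      _ = M * exp (1 - (j + 1) / M) := by
          rw [mul_left_comm, ← exp_add, show -(θ / M) + -i / M = -(θ + i) / M by ring, hθi]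
          congr 2; field_simp; ring
  exact (mul_le_mul_iff_right₀ hMpos).1 (key.trans hexp)

end StopLossSequence

lemma one_le_natMean {ρ : Measure ℕ} [IsProbabilityMeasure ρ] (h0 : ρ {0} = 0) :
    1 ≤ natMean ρ := by
  have hpos : ∀ᵐ x ∂ρ, x ≠ 0 := by rw [ae_iff]; simpa using h0
  calc (1 : ℝ≥0∞) = ∫⁻ _, 1 ∂ρ := by simp
    _ ≤ natMean ρ := lintegral_mono_ae (hpos.mono fun x hx => Nat.one_le_cast.2 (by omega))

lemma NBUE.measure_le_mul_natMean_le {ρ : Measure ℕ} [IsProbabilityMeasure ρ] (hρ : NBUE ρ)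
    (h0 : natMean ρ ≠ 0) (htop : natMean ρ ≠ ⊤) {t : ℝ} (ht : 0 ≤ t) :
    (ρ {k | (k : ℝ) ≤ t * (natMean ρ).toReal}).toReal ≤ t := by
  set M := (natMean ρ).toReal
  have hM : 0 < M := ENNReal.toReal_pos h0 htop
  rcases le_or_gt 1 t with ht1 | ht1
  · exact measureReal_le_one.trans ht1
  set j := ⌊t * M⌋₊
  have hj : (j : ℝ) ≤ t * M := Nat.floor_le (by positivity)
  have hmean : M ≤ j + M * (ρ (Ioi j)).toReal := by
    have h := (natMean_le_add_stopLoss ρ j).trans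
      (add_le_add_right ((nbue_iff_stopLoss_le ρ).1 hρ j) _)
    have h' := ENNReal.toReal_mono (by finiteness) h
    rwa [toReal_add (by finiteness) (by finiteness), toReal_mul, toReal_natCast] at h'
  have hIic : (ρ (Iic j)).toReal = 1 - (ρ (Ioi j)).toReal := by
    rw [← compl_Ioi, prob_compl_eq_one_sub measurableSet_Ioi,
      toReal_sub_of_le prob_le_one one_ne_top, toReal_one]
  have hsub : {k : ℕ | (k : ℝ) ≤ t * M} ⊆ Iic j := fun k hk => Nat.le_floor hk
  calc (ρ {k : ℕ | (k : ℝ) ≤ t * M}).toReal ≤ (ρ (Iic j)).toReal :=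
        toReal_mono (measure_ne_top _ _) (measure_mono hsub)
    _ = 1 - (ρ (Ioi j)).toReal := hIic
    _ ≤ t := le_of_mul_le_mul_left (by linarith) hM

lemma NBUE.measure_ge_mul_natMean_le {ρ : Measure ℕ} [IsProbabilityMeasure ρ] (hρ : NBUE ρ)
    (h1 : 1 ≤ natMean ρ) (htop : natMean ρ ≠ ⊤) (t : ℝ) :
    (ρ {k | t * (natMean ρ).toReal ≤ (k : ℝ)}).toReal ≤ Real.exp (1 - t) := by
  set M := (natMean ρ).toReal
  have hM : 1 ≤ M := by simpa using toReal_mono htop h1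
  rcases le_or_gt t 1 with ht1 | ht1
  · exact measureReal_le_one.trans (Real.one_le_exp (by linarith))
  set X := ⌈t * M⌉₊
  have hX : t * M ≤ X := Nat.le_ceil _
  have hX1 : 1 ≤ X := by exact_mod_cast (show (1 : ℝ) ≤ X by nlinarith)
  have hset : {k : ℕ | t * M ≤ k} = Ioi (X - 1) := by
    ext k; show t * M ≤ k ↔ X - 1 < k; rw [← Nat.ceil_le]; omega
  have hstop (k : ℕ) : stopLoss ρ k ≠ ⊤ := ne_top_of_le_ne_top htop (stopLoss_le_natMean ρ k)
  have htail := StopLossSequence.le_exp_one_sub_div (τ := fun k => (ρ (Ioi k)).toReal)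
    (γ := fun k => (stopLoss ρ k).toReal) (j := X - 1) hM
    (fun k => by rw [stopLoss_eq_add_stopLoss_succ, toReal_add (by finiteness) (hstop _)])
    (fun k => by
      rw [← toReal_mul]
      exact toReal_mono (by finiteness) ((nbue_iff_stopLoss_le ρ).1 hρ k))
    (fun k => toReal_nonneg) (by simp [M])
    (fun a b hab => toReal_mono (by finiteness) (measure_mono (Ioi_subset_Ioi hab)))
    (by push_cast [hX1]; nlinarith)
  rw [hset]
  refine htail.trans (Real.exp_le_exp.2 ?_)
  push_cast [hX1]
  rw [sub_add_cancel, _root_.sub_le_sub_iff_left, le_div_iff₀ (by linarith)]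
  exact hX

/-- If the child distribution `Z₁` (supported on positive integers, finite mean `m`)
is NBUE, then every generation `Zₙ` is NBUE, and `P[Zₙ ≥ t mⁿ] ≤ e^{1-t}` and
`P[Zₙ ≤ t mⁿ] ≤ t` for all `t > 0`. -/
theorem stmt13 (ν : Measure ℕ) [IsProbabilityMeasure ν]
    (hν0 : ν {0} = 0) (hmean : (∑' j : ℕ, (j : ENNReal) * ν {j}) ≠ ⊤)
    (hnbue : NBUE ν) :
    (∀ n : ℕ, NBUE (gwLaw ν n)) ∧
    (∀ n : ℕ, ∀ t : ℝ, 0 < t →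
      (gwLaw ν n {k | t * ((∑' j : ℕ, (j : ENNReal) * ν {j}).toReal) ^ n ≤ (k : ℝ)}).toReal
        ≤ Real.exp (1 - t) ∧
      (gwLaw ν n {k | (k : ℝ) ≤ t * ((∑' j : ℕ, (j : ENNReal) * ν {j}).toReal) ^ n}).toReal
        ≤ t) := by
  rw [← natMean_eq_tsum] at hmean ⊢
  have hZ := hnbue.gwLaw hν0
  refine ⟨hZ, fun n t ht => ?_⟩
  have h1 : 1 ≤ natMean (gwLaw ν n) := natMean_gwLaw ν n ▸ one_le_pow₀ (one_le_natMean hν0)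
  have htop : natMean (gwLaw ν n) ≠ ⊤ := natMean_gwLaw ν n ▸ pow_ne_top hmean
  rw [← toReal_pow, ← natMean_gwLaw]
  exact ⟨(hZ n).measure_ge_mul_natMean_le h1 htop t,
    (hZ n).measure_le_mul_natMean_le (one_pos.trans_le h1).ne' htop ht.le⟩
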